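/- arXiv:2211.07154 — 2 statements merged into one kernel-verified Lean document; each statement's English description precedes it below -/
import Mathlib

section
/- Let I = (G, {W_1, …, W_t}, k) be an instance of Partitioned Subset Treewidth and let (A, S, B) be a safe separation of I. Then at least one of the following holds: (1) I ◁ (A,S) has fewer terminal cliques than I; (2) {W_1, …, W_t} ◁ (A,S) = {W_1, …, W_t}; (3) S is a terminal clique of I ◁ (A,S) but not of I, and there exists a terminal clique W_i of I with W_i ∩ B ≠ ∅ and flp_{I ◁ (A,S)}(S) ≥ flp_I(W_i). -/
open SimpleGraph

variable {V ι : Type*}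

/-- The torso of `G` on a vertex set `X`: vertices `u ≠ v` of `X` are adjacent iff there is a
`u`–`v` walk in `G` all of whose internal vertices lie outside `X`. -/
def torsoGraph (G : SimpleGraph V) (X : Set V) : SimpleGraph V where
  Adj u v := u ≠ v ∧ u ∈ X ∧ v ∈ X ∧
    ∃ p : G.Walk u v, ∀ w ∈ p.support, w = u ∨ w = v ∨ w ∉ X
  symm := ⟨by
    rintro u v ⟨hne, hu, hv, p, hp⟩
    refine ⟨hne.symm, hv, hu, p.reverse, ?_⟩
    intro w hw
    rw [SimpleGraph.Walk.support_reverse, List.mem_reverse] at hw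
    rcases hp w hw with h | h | h
    · exact Or.inr (Or.inl h)
    · exact Or.inl h
    · exact Or.inr (Or.inr h)⟩
  loopless := ⟨fun _ h => h.1 rfl⟩

/-- `(T, bag)` is a tree decomposition of `G`. -/
structure IsTreeDecomp (G : SimpleGraph V) (T : SimpleGraph ι) (bag : ι → Set V) : Prop where
  tree : T.IsTree
  mem_bag : ∀ v : V, ∃ t, v ∈ bag t
  edge_bag : ∀ ⦃u v : V⦄, G.Adj u v → ∃ t, u ∈ bag t ∧ v ∈ bag t
  conn : ∀ v : V, (T.induce {t | v ∈ bag t}).Connected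

/-- `(X, (T, bag))` is a torso tree decomposition in `G`, i.e. `(T, bag)` is a tree
decomposition of `torsoGraph G X`. -/
structure IsTorsoTreeDecomp (G : SimpleGraph V) (X : Set V)
    (T : SimpleGraph ι) (bag : ι → Set V) : Prop where
  tree : T.IsTree
  bag_subset : ∀ t, bag t ⊆ X
  mem_bag : ∀ v ∈ X, ∃ t, v ∈ bag t
  edge_bag : ∀ ⦃u v : V⦄, (torsoGraph G X).Adj u v → ∃ t, u ∈ bag t ∧ v ∈ bag t
  conn : ∀ v ∈ X, (T.induce {t | v ∈ bag t}).Connected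

/-- `G` has treewidth at most `k`. -/
def HasTreewidthAtMost (G : SimpleGraph V) (k : ℕ) : Prop :=
  ∃ (n : ℕ) (T : SimpleGraph (Fin n)) (bag : Fin n → Set V),
    IsTreeDecomp G T bag ∧ ∀ t, (bag t).ncard ≤ k + 1

/-- `S` is an `(X, Y)`-separator in `G`: every walk from `X` to `Y` meets `S`. -/
def IsSep (G : SimpleGraph V) (X Y S : Set V) : Prop :=
  ∀ ⦃x y : V⦄, x ∈ X → y ∈ Y → ∀ p : G.Walk x y, ∃ s ∈ S, s ∈ p.support

/-- The maximum number of vertex-disjoint `X`–`Y` paths; by Menger's theorem this equals the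
minimum size of an `(X, Y)`-separator, which is how we define it. -/
noncomputable def flowG (G : SimpleGraph V) (X Y : Set V) : ℕ :=
  sInf (Set.ncard '' {S : Set V | IsSep G X Y S})

/-- `X` is linked into `Y`. -/
def LinkedInto (G : SimpleGraph V) (X Y : Set V) : Prop :=
  flowG G X Y = X.ncard

/-- `X` is strictly linked into `Y`. -/
def StrictlyLinkedInto (G : SimpleGraph V) (X Y : Set V) : Prop :=
  LinkedInto G X Y ∧
    ∀ S : Set V, IsSep G X Y S → S.ncard = X.ncard → S = X ∨ S = Y

/-- `R_G(X, S)`: the set of vertices of `G \ S` reachable from `X \ S`. -/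
def reachG (G : SimpleGraph V) (X S : Set V) : Set V :=
  {v | ∃ x ∈ X, x ∉ S ∧ ∃ p : G.Walk x v, ∀ w ∈ p.support, w ∉ S}

/-- `S` is a minimal `(X, Y)`-separator. -/
def IsMinimalSep (G : SimpleGraph V) (X Y S : Set V) : Prop :=
  IsSep G X Y S ∧ ∀ S' : Set V, S' ⊂ S → ¬ IsSep G X Y S'

/-- `S` is an important `(A, B)`-separator. -/
def IsImportantSep (G : SimpleGraph V) (A B S : Set V) : Prop :=
  IsMinimalSep G A B S ∧
    ¬ ∃ S' : Set V, IsSep G A B S' ∧ S'.ncard ≤ S.ncard ∧ reachG G A S ⊂ reachG G A S'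

/-- The important `(A, B)`-separator `S'` dominates the `(A, B)`-separator `S`. -/
def DominatesSep (G : SimpleGraph V) (A B S S' : Set V) : Prop :=
  IsImportantSep G A B S' ∧ S'.ncard ≤ S.ncard ∧ reachG G A S ⊆ reachG G A S'

/-- `(A, S, B)` is a separation of `G`. -/
structure IsSeparation (G : SimpleGraph V) (A S B : Set V) : Prop where
  disjoint_AS : Disjoint A S
  disjoint_AB : Disjoint A B
  disjoint_SB : Disjoint S B
  union_eq : A ∪ S ∪ B = Set.univ
  no_adj : ∀ ⦃a b : V⦄, a ∈ A → b ∈ B → ¬ G.Adj a b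

open Classical in
/-- The flow potential `flp_G(X, Y)`. -/
noncomputable def flpG (G : SimpleGraph V) (X Y : Set V) : ℕ :=
  if X = Set.univ then X.ncard
  else sInf {n : ℕ | ∃ A S B : Set V, IsSeparation G A S B ∧
    X ⊆ A ∪ S ∧ Y ⊆ B ∪ S ∧ B.Nonempty ∧ S.ncard = n}

/-- The graph consisting of a clique on `S` (and no other edges). -/
def cliqueOn (S : Set V) : SimpleGraph V where
  Adj u v := u ≠ v ∧ u ∈ S ∧ v ∈ S
  symm := ⟨fun _ _ ⟨h, hu, hv⟩ => ⟨h.symm, hv, hu⟩⟩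
  loopless := ⟨fun _ h => h.1 rfl⟩

/-- `G ⊗ S`: the graph obtained from `G` by making `S` a clique. -/
def addCliqueG (G : SimpleGraph V) (S : Set V) : SimpleGraph V := G ⊔ cliqueOn S

/-- `(G, Ws, k)` is an instance of Partitioned Subset Treewidth: `Ws` is a finite nonempty
family of terminal cliques, `k ≥ 1`, each terminal clique being a clique of `G` of size at
most `k + 1`. -/
def IsPSTWInstance (G : SimpleGraph V) (Ws : Set (Set V)) (k : ℕ) : Prop :=
  Ws.Finite ∧ Ws.Nonempty ∧ 1 ≤ k ∧ ∀ W ∈ Ws, G.IsClique W ∧ W.ncard ≤ k + 1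

/-- `(X, (T, bag))` is a solution of the instance `(G, Ws, k)`. -/
def IsSolutionTD (G : SimpleGraph V) (Ws : Set (Set V)) (k : ℕ)
    (X : Set V) (T : SimpleGraph ι) (bag : ι → Set V) : Prop :=
  IsTorsoTreeDecomp G X T bag ∧ ⋃₀ Ws ⊆ X ∧ ∀ t, (bag t).ncard ≤ k + 1

/-- The instance `(G, Ws, k)` is a yes-instance. -/
def IsYesInstance (G : SimpleGraph V) (Ws : Set (Set V)) (k : ℕ) : Prop :=
  ∃ (κ : Type) (T : SimpleGraph κ) (bag : κ → Set V) (X : Set V),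
    IsSolutionTD G Ws k X T bag

/-- `W̄_I(W)`: the union of the terminal cliques other than `W`. -/
def otherUnion (Ws : Set (Set V)) (W : Set V) : Set V := ⋃₀ (Ws \ {W})

/-- `flp_I(W) = flp_G(W, W̄_I(W))`. -/
noncomputable def flpInst (G : SimpleGraph V) (Ws : Set (Set V)) (W : Set V) : ℕ :=
  flpG G W (otherUnion Ws W)

/-- `(A, S, B)` is a safe separation of the instance `(G, Ws, k)`. -/
def IsSafeSeparation (G : SimpleGraph V) (Ws : Set (Set V)) (A S B : Set V) : Prop :=
  IsSeparation G A S B ∧ A.Nonempty ∧ B.Nonempty ∧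
    ∃ Wa ∈ Ws, ∃ Wb ∈ Ws,
      LinkedInto G S ((A ∪ S) ∩ Wa) ∧ LinkedInto G S ((B ∪ S) ∩ Wb)

/-- `Ws ◁ (A, S)`: remove the terminal cliques not meeting `A`, then insert `S` if no superset
of `S` is present. -/
def restrictCliques (Ws : Set (Set V)) (A S : Set V) : Set (Set V) :=
  {W ∈ Ws | (W ∩ A).Nonempty} ∪
    {W | W = S ∧ ¬ ∃ W' ∈ Ws, (W' ∩ A).Nonempty ∧ S ⊆ W'}

/-- `G ◁ (A, S) = G[A ∪ S] ⊗ S`, as a graph on the vertex set `A ∪ S`. -/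
def restrictGraph (G : SimpleGraph V) (A S : Set V) : SimpleGraph ↥(A ∪ S) :=
  addCliqueG (G.induce (A ∪ S)) (Subtype.val ⁻¹' S)

/-- The terminal cliques of `I ◁ (A, S)`, viewed as subsets of the vertex set `A ∪ S`. -/
def restrictSets (Ws : Set (Set V)) (A S : Set V) : Set (Set ↥(A ∪ S)) :=
  (fun W => Subtype.val ⁻¹' W) '' restrictCliques Ws A S

/-- The terminal cliques of `I × (Wi, Wj)`. -/
def mergeCliques (Ws : Set (Set V)) (Wi Wj : Set V) : Set (Set V) :=
  insert (Wi ∪ Wj) (Ws \ {Wi, Wj})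

/-- The terminal cliques of `I + (W, ·)`, replacing `W` by `W'`. -/
def replaceClique (Ws : Set (Set V)) (W W' : Set V) : Set (Set V) :=
  insert W' (Ws \ {W})

/-- The instance `(G, Ws, k)` is maximally merged. -/
def MaximallyMerged (G : SimpleGraph V) (Ws : Set (Set V)) (k : ℕ) : Prop :=
  ∀ Wi ∈ Ws, ∀ Wj ∈ Ws, Wi ≠ Wj → (Wi ∪ Wj).ncard ≤ k + 1 →
    ¬ IsYesInstance (addCliqueG G (Wi ∪ Wj)) (mergeCliques Ws Wi Wj) k

/-- `Wi` is a potential forget-clique of the instance `(G, Ws, k)`. -/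
def IsPotentialForgetClique (G : SimpleGraph V) (Ws : Set (Set V)) (k : ℕ)
    (Wi : Set V) : Prop :=
  ∃ (κ : Type) (T : SimpleGraph κ) (bag : κ → Set V) (X : Set V),
    IsSolutionTD G Ws k X T bag ∧
    ∃ l p : κ, T.Adj l p ∧ (∀ q, T.Adj l q → q = p) ∧
      Wi ⊆ bag l ∧ ∃ w ∈ Wi \ otherUnion Ws Wi, bag p = bag l \ {w}

/-- The disjoint union of two trees together with one extra edge between `a` and `b`. -/
def glueTrees {ι₁ ι₂ : Type*} (T₁ : SimpleGraph ι₁) (T₂ : SimpleGraph ι₂)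
    (a : ι₁) (b : ι₂) : SimpleGraph (ι₁ ⊕ ι₂) where
  Adj x y :=
    (∃ u v, T₁.Adj u v ∧ x = Sum.inl u ∧ y = Sum.inl v) ∨
    (∃ u v, T₂.Adj u v ∧ x = Sum.inr u ∧ y = Sum.inr v) ∨
    (x = Sum.inl a ∧ y = Sum.inr b) ∨
    (x = Sum.inr b ∧ y = Sum.inl a)
  symm := ⟨by
    rintro x y (⟨u, v, h, rfl, rfl⟩ | ⟨u, v, h, rfl, rfl⟩ | ⟨rfl, rfl⟩ | ⟨rfl, rfl⟩)
    · exact Or.inl ⟨v, u, h.symm, rfl, rfl⟩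
    · exact Or.inr (Or.inl ⟨v, u, h.symm, rfl, rfl⟩)
    · exact Or.inr (Or.inr (Or.inr ⟨rfl, rfl⟩))
    · exact Or.inr (Or.inr (Or.inl ⟨rfl, rfl⟩))⟩
  loopless := ⟨by
    rintro x (⟨u, v, h, rfl, he⟩ | ⟨u, v, h, rfl, he⟩ | ⟨rfl, he⟩ | ⟨rfl, he⟩)
    · exact h.ne (Sum.inl.inj he)
    · exact h.ne (Sum.inr.inj he)
    · exact Sum.inl_ne_inr he
    · exact Sum.inr_ne_inl he⟩

/-- The sum of the weights `d` over the set `S`. -/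
noncomputable def setSum [Finite V] (d : V → ℕ) (S : Set V) : ℕ :=
  ∑ v ∈ S.toFinite.toFinset, d v

/-!
Let `Wb` be the terminal clique into whose `B`-side `S` is linked. If `I ◁ (A, S)` gains the new
clique `S`, linkage forces `Wb` to meet `B`; being a clique, `Wb` then misses `A` and is
dropped. If a second clique is dropped the count decreases; otherwise every other clique
meets `A`, hence lies in `A ∪ S`, and an optimal separation witnessing `flp_{I ◁ (A,S)}(S)`
lifts to `G` by adding `B` to its left side, where it witnesses the bound on `flp_I(Wb)`.
-/

theorem flowG_le_ncard_right (G : SimpleGraph V) (X Y : Set V) : flowG G X Y ≤ Y.ncard :=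
  Nat.sInf_le ⟨Y, fun _ _ _ hy p => ⟨_, hy, p.end_mem_support⟩, rfl⟩

theorem LinkedInto.subset_of_inter {G : SimpleGraph V} {X W : Set V} (hX : X.Finite)
    (h : LinkedInto G X (X ∩ W)) : X ⊆ W := by
  have hle : X.ncard ≤ (X ∩ W).ncard := h ▸ flowG_le_ncard_right G X (X ∩ W)
  rw [← Set.eq_of_subset_of_ncard_le Set.inter_subset_left hle hX]
  exact Set.inter_subset_right

theorem isSeparation_empty_compl_singleton (G : SimpleGraph V) (b : V) :
    IsSeparation G ∅ {b}ᶜ {b} where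
  disjoint_AS := Set.empty_disjoint _
  disjoint_AB := Set.empty_disjoint _
  disjoint_SB := disjoint_compl_left
  union_eq := by rw [Set.empty_union, Set.compl_union_self]
  no_adj _ _ ha := absurd ha (Set.notMem_empty _)

theorem flpG_le_of_isSeparation {G : SimpleGraph V} {X Y A S B : Set V} (hX : X ≠ Set.univ)
    (h : IsSeparation G A S B) (hXS : X ⊆ A ∪ S) (hYS : Y ⊆ B ∪ S) (hB : B.Nonempty) :
    flpG G X Y ≤ S.ncard := by
  rw [flpG, if_neg hX]
  exact Nat.sInf_le ⟨A, S, B, h, hXS, hYS, hB, rfl⟩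

theorem exists_isSeparation_ncard_eq_flpG (G : SimpleGraph V) {X : Set V} (Y : Set V)
    (hX : X ≠ Set.univ) :
    ∃ A S B : Set V, IsSeparation G A S B ∧ X ⊆ A ∪ S ∧ Y ⊆ B ∪ S ∧ B.Nonempty ∧
      S.ncard = flpG G X Y := by
  obtain ⟨b, hb⟩ := (Set.ne_univ_iff_exists_notMem X).mp hX
  rw [flpG, if_neg hX]
  refine Nat.sInf_mem (s := {n | ∃ A S B : Set V, IsSeparation G A S B ∧ X ⊆ A ∪ S ∧
    Y ⊆ B ∪ S ∧ B.Nonempty ∧ S.ncard = n}) ⟨_, ∅, {b}ᶜ, {b},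
    isSeparation_empty_compl_singleton G b, ?_, ?_, Set.singleton_nonempty b, rfl⟩
  · exact fun x hx => Or.inr fun hxb => hb (hxb ▸ hx)
  · rw [Set.union_comm, Set.compl_union_self]
    exact Set.subset_univ Y

namespace IsSeparation

variable {G : SimpleGraph V} {A S B : Set V}

theorem mem_or_mem_or_mem (h : IsSeparation G A S B) (x : V) : x ∈ A ∨ x ∈ S ∨ x ∈ B := by
  have hx : x ∈ A ∪ S ∪ B := h.union_eq ▸ Set.mem_univ x
  rcases hx with (hx | hx) | hx
  exacts [Or.inl hx, Or.inr (Or.inl hx), Or.inr (Or.inr hx)]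

theorem disjoint_union_left (h : IsSeparation G A S B) : Disjoint (A ∪ S) B :=
  Set.disjoint_union_left.mpr ⟨h.disjoint_AB, h.disjoint_SB⟩

theorem disjoint_of_isClique (h : IsSeparation G A S B) {W : Set V} (hW : G.IsClique W)
    (hWA : (W ∩ A).Nonempty) : Disjoint W B := by
  obtain ⟨a, haW, haA⟩ := hWA
  refine Set.disjoint_left.mpr fun b hbW hbB => h.no_adj haA hbB (hW haW hbW ?_)
  rintro rfl
  exact Set.disjoint_left.mp h.disjoint_AB haA hbB

theorem subset_union_of_disjoint_right (h : IsSeparation G A S B) {W : Set V}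
    (hW : Disjoint W B) : W ⊆ A ∪ S := fun x hx => by
  rcases h.mem_or_mem_or_mem x with hxA | hxS | hxB
  exacts [Or.inl hxA, Or.inr hxS, absurd hxB (Set.disjoint_left.mp hW hx)]

theorem inter_nonempty_or_eq_or_subset_of_linkedInto (h : IsSeparation G A S B) (hS : S.Finite)
    {W : Set V} (hlink : LinkedInto G S ((B ∪ S) ∩ W)) :
    (W ∩ B).Nonempty ∨ W = S ∨ (S ⊆ W ∧ (W ∩ A).Nonempty) := by
  by_cases hWB : (W ∩ B).Nonempty
  · exact Or.inl hWB
  have hSW : S ⊆ W := by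
    refine LinkedInto.subset_of_inter (G := G) hS ?_
    rwa [Set.union_inter_distrib_right, Set.inter_comm B, Set.not_nonempty_iff_eq_empty.mp hWB,
      Set.empty_union] at hlink
  by_cases hWA : (W ∩ A).Nonempty
  · exact Or.inr (Or.inr ⟨hSW, hWA⟩)
  refine Or.inr (Or.inl (Set.Subset.antisymm (fun x hx => ?_) hSW))
  rcases h.mem_or_mem_or_mem x with hxA | hxS | hxB
  exacts [absurd ⟨x, hx, hxA⟩ hWA, hxS, absurd ⟨x, hx, hxB⟩ hWB]

/-- Since `S` lies in `A' ∪ S'`, the side `B'` lies in `A` and so has no neighbours in `B`;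
edges of `G` inside `A ∪ S` are edges of `G ◁ (A, S)`. -/
theorem lift_restrictGraph (h : IsSeparation G A S B) {A' S' B' : Set ↥(A ∪ S)}
    (h' : IsSeparation (restrictGraph G A S) A' S' B') (hS : Subtype.val ⁻¹' S ⊆ A' ∪ S') :
    IsSeparation G (Subtype.val '' A' ∪ B) (Subtype.val '' S') (Subtype.val '' B') where
  disjoint_AS := Set.disjoint_union_left.mpr
    ⟨(Set.disjoint_image_iff Subtype.val_injective).mpr h'.disjoint_AS,
      (h.disjoint_union_left.mono_left (Subtype.coe_image_subset _ S')).symm⟩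
  disjoint_AB := Set.disjoint_union_left.mpr
    ⟨(Set.disjoint_image_iff Subtype.val_injective).mpr h'.disjoint_AB,
      (h.disjoint_union_left.mono_left (Subtype.coe_image_subset _ B')).symm⟩
  disjoint_SB := (Set.disjoint_image_iff Subtype.val_injective).mpr h'.disjoint_SB
  union_eq := by
    refine Set.eq_univ_of_univ_subset ?_
    calc Set.univ = A ∪ S ∪ B := h.union_eq.symm
      _ = Subtype.val '' (A' ∪ S' ∪ B') ∪ B := by
        rw [h'.union_eq, Set.image_univ, Subtype.range_coe]
      _ ⊆ _ := by
        rw [Set.image_union, Set.image_union]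
        intro x
        simp only [Set.mem_union]
        tauto
  no_adj := by
    rintro _ _ (⟨a, ha, rfl⟩ | haB) ⟨b, hb, rfl⟩ hadj
    · exact h'.no_adj ha hb (Or.inl hadj)
    · have hbA : (b : V) ∈ A := b.2.resolve_right fun hbS => (hS hbS).elim
        (fun hA' => Set.disjoint_left.mp h'.disjoint_AB hA' hb)
        (fun hS' => Set.disjoint_left.mp h'.disjoint_SB hS' hb)
      exact h.no_adj hbA haB hadj.symm

end IsSeparation

theorem restrictCliques_subset_insert (Ws : Set (Set V)) (A S : Set V) :
    restrictCliques Ws A S ⊆ insert S {W ∈ Ws | (W ∩ A).Nonempty} := by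
  rintro W (hW | ⟨rfl, -⟩)
  exacts [Or.inr hW, Or.inl rfl]

theorem restrictCliques_subset_or (Ws : Set (Set V)) (A S : Set V) :
    restrictCliques Ws A S ⊆ Ws ∨
      (S ∈ restrictCliques Ws A S ∧ S ∉ Ws ∧ ∀ W ∈ Ws, (W ∩ A).Nonempty → ¬ S ⊆ W) := by
  by_cases hsub : restrictCliques Ws A S ⊆ Ws
  · exact Or.inl hsub
  obtain ⟨W, hW, hWWs⟩ := Set.not_subset.mp hsub
  rcases hW with hW | ⟨rfl, hnosup⟩
  · exact absurd hW.1 hWWs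
  · exact Or.inr ⟨Or.inr ⟨rfl, hnosup⟩, hWWs,
      fun W' hW' hW'A hSW' => hnosup ⟨W', hW', hW'A, hSW'⟩⟩

theorem ncard_restrictCliques_lt {Ws : Set (Set V)} (hWs : Ws.Finite) {A S W₁ W₂ : Set V}
    (h₁ : W₁ ∈ Ws) (h₂ : W₂ ∈ Ws) (hne : W₁ ≠ W₂) (hA₁ : ¬ (W₁ ∩ A).Nonempty)
    (hA₂ : ¬ (W₂ ∩ A).Nonempty) : (restrictCliques Ws A S).ncard < Ws.ncard := by
  have hpair : {W₁, W₂} ⊆ Ws := Set.insert_subset h₁ (Set.singleton_subset_iff.mpr h₂)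
  have hsub : restrictCliques Ws A S ⊆ insert S (Ws \ {W₁, W₂}) := by
    refine (restrictCliques_subset_insert Ws A S).trans (Set.insert_subset_insert ?_)
    rintro W ⟨hW, hWA⟩
    refine ⟨hW, ?_⟩
    rintro (rfl | rfl)
    exacts [hA₁ hWA, hA₂ hWA]
  have htwo : 2 ≤ Ws.ncard := Set.ncard_pair hne ▸ Set.ncard_le_ncard hpair hWs
  calc (restrictCliques Ws A S).ncard ≤ (insert S (Ws \ {W₁, W₂})).ncard :=
        Set.ncard_le_ncard hsub (hWs.sdiff.insert S)
    _ ≤ (Ws \ {W₁, W₂}).ncard + 1 := Set.ncard_insert_le _ _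
    _ = Ws.ncard - 2 + 1 := by rw [Set.ncard_sdiff hpair, Set.ncard_pair hne]
    _ < Ws.ncard := by omega

theorem otherUnion_subset_image_restrictSets {Ws : Set (Set V)} {A S W₀ : Set V}
    (hSWs : S ∉ Ws) (hother : ∀ W ∈ Ws, W ≠ W₀ → (W ∩ A).Nonempty ∧ W ⊆ A ∪ S) :
    otherUnion Ws W₀ ⊆ Subtype.val '' otherUnion (restrictSets Ws A S) (Subtype.val ⁻¹' S) := by
  rintro v ⟨W, ⟨hW, hWne⟩, hvW⟩
  obtain ⟨hWA, hWU⟩ := hother W hW hWne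
  refine ⟨⟨v, hWU hvW⟩, ⟨Subtype.val ⁻¹' W, ⟨⟨W, Or.inl ⟨hW, hWA⟩, rfl⟩, fun hWS => ?_⟩, hvW⟩, rfl⟩
  have himage := congrArg (Subtype.val '' ·) hWS
  simp only [Subtype.image_preimage_coe] at himage
  rw [Set.inter_eq_right.mpr hWU, Set.inter_eq_right.mpr Set.subset_union_right] at himage
  exact hSWs (himage ▸ hW)

theorem flpInst_le_flpInst_restrict {G : SimpleGraph V} {Ws : Set (Set V)} {A S B W₀ : Set V}
    (hsep : IsSeparation G A S B) (hA : A.Nonempty) (hSWs : S ∉ Ws)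
    (hW₀A : ¬ (W₀ ∩ A).Nonempty) (hother : ∀ W ∈ Ws, W ≠ W₀ → (W ∩ A).Nonempty ∧ W ⊆ A ∪ S) :
    flpInst G Ws W₀ ≤
      flpInst (restrictGraph G A S) (restrictSets Ws A S) (Subtype.val ⁻¹' S) := by
  obtain ⟨a, haA⟩ := hA
  have hS : Subtype.val ⁻¹' S ≠ (Set.univ : Set ↥(A ∪ S)) := fun h =>
    Set.disjoint_left.mp hsep.disjoint_AS haA
      (show (⟨a, Or.inl haA⟩ : ↥(A ∪ S)) ∈ Subtype.val ⁻¹' S from h ▸ Set.mem_univ _)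
  have hW₀ : W₀ ≠ Set.univ := fun h => hW₀A ⟨a, h ▸ Set.mem_univ a, haA⟩
  obtain ⟨A', S', B', hsep', hSsub, hYsub, hB', hcard⟩ := exists_isSeparation_ncard_eq_flpG
    (restrictGraph G A S) (otherUnion (restrictSets Ws A S) (Subtype.val ⁻¹' S)) hS
  rw [flpInst, flpInst, ← hcard, ← Set.ncard_image_of_injective S' Subtype.val_injective]
  refine flpG_le_of_isSeparation hW₀ (hsep.lift_restrictGraph hsep' hSsub) (fun x hx => ?_) ?_
    (hB'.image _)
  · rcases hsep.mem_or_mem_or_mem x with hxA | hxS | hxB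
    · exact absurd ⟨x, hx, hxA⟩ hW₀A
    · rcases hSsub (show (⟨x, Or.inr hxS⟩ : ↥(A ∪ S)) ∈ Subtype.val ⁻¹' S from hxS) with h | h
      exacts [Or.inl (Or.inl ⟨_, h, rfl⟩), Or.inr ⟨_, h, rfl⟩]
    · exact Or.inl (Or.inr hxB)
  · calc otherUnion Ws W₀
        ⊆ Subtype.val '' otherUnion (restrictSets Ws A S) (Subtype.val ⁻¹' S) :=
          otherUnion_subset_image_restrictSets hSWs hother
      _ ⊆ Subtype.val '' (B' ∪ S') := Set.image_mono hYsub
      _ = _ := Set.image_union _ _ _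

/-- If `(A, S, B)` is a safe separation of the instance `I = (G, Ws, k)` then: (1)
`I ◁ (A, S)` has fewer terminal cliques than `I`; or (2) the terminal cliques of `I ◁ (A, S)`
coincide with those of `I`; or (3) `S` is a terminal clique of `I ◁ (A, S)` but not of `I`,
and there is a terminal clique `W_i` of `I` meeting `B` with
`flp_{I ◁ (A,S)}(S) ≥ flp_I(W_i)`. -/
theorem safe_separation_flp_cases {V : Type} [Fintype V]
    (G : SimpleGraph V) (Ws : Set (Set V)) (k : ℕ)
    (hI : IsPSTWInstance G Ws k)
    (A S B : Set V) (hsafe : IsSafeSeparation G Ws A S B) :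
    (restrictCliques Ws A S).ncard < Ws.ncard ∨
    restrictCliques Ws A S = Ws ∨
    (S ∈ restrictCliques Ws A S ∧ S ∉ Ws ∧
      ∃ Wi ∈ Ws, (Wi ∩ B).Nonempty ∧
        flpInst G Ws Wi
          ≤ flpInst (restrictGraph G A S) (restrictSets Ws A S) (Subtype.val ⁻¹' S)) := by
  obtain ⟨hfin, -, -, hclique⟩ := hI
  obtain ⟨hsep, hA, -, -, -, Wb, hWb, -, hlinkB⟩ := hsafe
  rcases restrictCliques_subset_or Ws A S with hsub | ⟨hSmem, hSWs, hnosup⟩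
  · rcases hsub.ssubset_or_eq with hlt | heq
    exacts [Or.inl (Set.ncard_lt_ncard hlt hfin), Or.inr (Or.inl heq)]
  have hWbB : (Wb ∩ B).Nonempty := by
    rcases hsep.inter_nonempty_or_eq_or_subset_of_linkedInto S.toFinite hlinkB with
      h | rfl | ⟨hSWb, hWbA⟩
    exacts [h, absurd hWb hSWs, absurd hSWb (hnosup Wb hWb hWbA)]
  have hWbA : ¬ (Wb ∩ A).Nonempty := fun h => Set.not_disjoint_iff_nonempty_inter.mpr hWbB
    (hsep.disjoint_of_isClique (hclique Wb hWb).1 h)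
  by_cases hdrop : ∃ Wd ∈ Ws, Wd ≠ Wb ∧ ¬ (Wd ∩ A).Nonempty
  · obtain ⟨Wd, hWd, hne, hWdA⟩ := hdrop
    exact Or.inl (ncard_restrictCliques_lt hfin hWd hWb hne hWdA hWbA)
  push Not at hdrop
  refine Or.inr (Or.inr ⟨hSmem, hSWs, Wb, hWb, hWbB, ?_⟩)
  refine flpInst_le_flpInst_restrict hsep hA hSWs hWbA fun W hW hne => ?_
  have hWA := hdrop W hW hne
  exact ⟨hWA, hsep.subset_union_of_disjoint_right (hsep.disjoint_of_isClique (hclique W hW).1 hWA)⟩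
end

section
/- Let I = (G, {W_1, …, W_t}, k) be an instance of Partitioned Subset Treewidth that has no safe separations. Then for each pair of terminal cliques W_i, W_j with |W_i| ≤ |W_j|, the set W_i is strictly linked into W_j. -/
/-!
A minimum `(W_i, W_j)`-separator `S` is linked into both `W_i` and `W_j`, since any smaller
separator of `S` from either side would also separate `W_i` from `W_j`. If `S` contains neither
clique, then (vertices reachable from `W_i \ S`, `S`, the rest) is a strict separation, which is
therefore safe. Hence, without safe separations, every minimum separator contains `W_i` or `W_j`,
and comparing cardinalities gives `|S| = |W_i|` and `S ∈ {W_i, W_j}`.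
-/

open SimpleGraph

variable {V ι : Type*}

section Separators

variable {G : SimpleGraph V} {X Y S T : Set V}

lemma isSep_self_left (G : SimpleGraph V) (X Y : Set V) : IsSep G X Y X :=
  fun x _ hx _ p => ⟨x, hx, p.start_mem_support⟩

lemma isSep_comm : IsSep G X Y S ↔ IsSep G Y X S :=
  ⟨fun h _ _ hy hx p => by simpa using h hx hy p.reverse,
    fun h _ _ hx hy p => by simpa using h hy hx p.reverse⟩

lemma IsSep.trans (hT : IsSep G X S T) (hS : IsSep G X Y S) : IsSep G X Y T := by
  classical
  intro x y hx hy p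
  obtain ⟨s, hs, hsp⟩ := hS hx hy p
  obtain ⟨t, ht, htq⟩ := hT hx hs (p.takeUntil s hsp)
  exact ⟨t, ht, p.support_takeUntil_subset_support hsp htq⟩

lemma flowG_le_ncard (h : IsSep G X Y S) : flowG G X Y ≤ S.ncard :=
  Nat.sInf_le ⟨S, h, rfl⟩

lemma flowG_le_ncard_left (G : SimpleGraph V) (X Y : Set V) : flowG G X Y ≤ X.ncard :=
  flowG_le_ncard (isSep_self_left G X Y)

lemma flowG_comm : flowG G X Y = flowG G Y X := by
  simp only [flowG, isSep_comm (X := X)]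

lemma exists_isSep_ncard_eq_flowG (G : SimpleGraph V) (X Y : Set V) :
    ∃ S, IsSep G X Y S ∧ S.ncard = flowG G X Y :=
  Nat.sInf_mem (s := Set.ncard '' {S | IsSep G X Y S}) ⟨_, X, isSep_self_left G X Y, rfl⟩

lemma IsSep.linkedInto_left (hS : IsSep G X Y S) (hmin : S.ncard = flowG G X Y) :
    LinkedInto G S X := by
  obtain ⟨T, hT, hTcard⟩ := exists_isSep_ncard_eq_flowG G S X
  refine (flowG_le_ncard_left G S X).antisymm ?_
  calc S.ncard = flowG G X Y := hmin
    _ ≤ T.ncard := flowG_le_ncard ((isSep_comm.1 hT).trans hS)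
    _ = flowG G S X := hTcard

lemma IsSep.linkedInto_right (hS : IsSep G X Y S) (hmin : S.ncard = flowG G X Y) :
    LinkedInto G S Y :=
  (isSep_comm.1 hS).linkedInto_left (hmin.trans flowG_comm)

end Separators

section Reach

variable {G : SimpleGraph V} {X Y S : Set V}

lemma notMem_of_mem_reachG {v : V} (hv : v ∈ reachG G X S) : v ∉ S := by
  obtain ⟨_, _, _, p, hp⟩ := hv
  exact hp v p.end_mem_support

lemma mem_reachG_of_mem_diff {x : V} (hx : x ∈ X \ S) : x ∈ reachG G X S :=
  ⟨x, hx.1, hx.2, .nil, by simpa using hx.2⟩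

lemma subset_reachG_union : X ⊆ reachG G X S ∪ S := fun x hx =>
  (em (x ∈ S)).elim Or.inr fun hxS => Or.inl (mem_reachG_of_mem_diff ⟨hx, hxS⟩)

lemma IsSep.disjoint_reachG (h : IsSep G X Y S) : Disjoint (reachG G X S) Y := by
  refine Set.disjoint_left.2 ?_
  rintro y ⟨x, hx, -, p, hp⟩ hy
  obtain ⟨s, hs, hsp⟩ := h hx hy p
  exact hp s hsp hs

lemma isSeparation_reachG (G : SimpleGraph V) (X S : Set V) :
    IsSeparation G (reachG G X S) S (reachG G X S ∪ S)ᶜ where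
  disjoint_AS := Set.disjoint_left.2 fun _ => notMem_of_mem_reachG
  disjoint_AB := Set.disjoint_left.2 fun _ ha hb => hb (Or.inl ha)
  disjoint_SB := Set.disjoint_left.2 fun _ hs hb => hb (Or.inr hs)
  union_eq := Set.union_compl_self _
  no_adj := by
    rintro a b ⟨x, hx, hxS, p, hp⟩ hb hab
    have hbS : b ∉ S := fun hbS => hb (Or.inr hbS)
    refine hb (Or.inl ⟨x, hx, hxS, p.concat hab, fun w hw => ?_⟩)
    rw [SimpleGraph.Walk.support_concat, List.mem_append, List.mem_singleton] at hw
    exact hw.elim (hp w) fun hwb => hwb ▸ hbS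

end Reach

lemma isSafeSeparation_reachG {G : SimpleGraph V} {Ws : Set (Set V)} {Wi Wj S : Set V}
    (hWi : Wi ∈ Ws) (hWj : Wj ∈ Ws) (hS : IsSep G Wi Wj S) (hmin : S.ncard = flowG G Wi Wj)
    (hWiS : ¬ Wi ⊆ S) (hWjS : ¬ Wj ⊆ S) :
    IsSafeSeparation G Ws (reachG G Wi S) S (reachG G Wi S ∪ S)ᶜ := by
  obtain ⟨x, hx⟩ := Set.not_subset.1 hWiS
  obtain ⟨y, hy⟩ := Set.not_subset.1 hWjS
  have hWj_sub : Wj ⊆ (reachG G Wi S ∪ S)ᶜ ∪ S := fun w hw =>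
    (em (w ∈ S)).elim Or.inr fun hwS => Or.inl fun hw' =>
      hw'.elim (fun hwA => Set.disjoint_left.1 hS.disjoint_reachG hwA hw) hwS
  refine ⟨isSeparation_reachG G Wi S, ⟨x, mem_reachG_of_mem_diff hx⟩, ⟨y, ?_⟩,
    Wi, hWi, Wj, hWj, ?_, ?_⟩
  · exact (hWj_sub hy.1).resolve_right hy.2
  · rw [Set.inter_eq_right.2 subset_reachG_union]
    exact hS.linkedInto_left hmin
  · rw [Set.inter_eq_right.2 hWj_sub]
    exact hS.linkedInto_right hmin

lemma subset_or_subset_of_isSep_of_forall_not_isSafeSeparation {G : SimpleGraph V}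
    {Ws : Set (Set V)} (hnosafe : ∀ A S B : Set V, ¬ IsSafeSeparation G Ws A S B)
    {Wi Wj S : Set V} (hWi : Wi ∈ Ws) (hWj : Wj ∈ Ws) (hS : IsSep G Wi Wj S)
    (hmin : S.ncard = flowG G Wi Wj) : Wi ⊆ S ∨ Wj ⊆ S := by
  by_contra! h
  exact hnosafe _ _ _ (isSafeSeparation_reachG hWi hWj hS hmin h.1 h.2)

theorem no_safe_separation_strictly_linked_general {V : Type} [Fintype V]
    (G : SimpleGraph V) (Ws : Set (Set V))
    (hnosafe : ∀ A S B : Set V, ¬ IsSafeSeparation G Ws A S B) :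
    ∀ Wi ∈ Ws, ∀ Wj ∈ Ws, Wi.ncard ≤ Wj.ncard → StrictlyLinkedInto G Wi Wj := by
  intro Wi hWi Wj hWj hcard
  have hcontains : ∀ S, IsSep G Wi Wj S → S.ncard = flowG G Wi Wj → Wi ⊆ S ∨ Wj ⊆ S :=
    fun _ => subset_or_subset_of_isSep_of_forall_not_isSafeSeparation hnosafe hWi hWj
  have hlinked : LinkedInto G Wi Wj := by
    obtain ⟨S, hS, hmin⟩ := exists_isSep_ncard_eq_flowG G Wi Wj
    refine (flowG_le_ncard_left G Wi Wj).antisymm (hmin ▸ ?_)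
    rcases hcontains _ hS hmin with hsub | hsub
    · exact Set.ncard_le_ncard hsub
    · exact hcard.trans (Set.ncard_le_ncard hsub)
  refine ⟨hlinked, fun S hS hScard => ?_⟩
  rcases hcontains _ hS (hScard.trans hlinked.symm) with hsub | hsub
  · exact Or.inl (Set.eq_of_subset_of_ncard_le hsub hScard.le).symm
  · exact Or.inr (Set.eq_of_subset_of_ncard_le hsub (hScard.le.trans hcard)).symm

/-- If the instance `I = (G, Ws, k)` has no safe separations, then for every pair of terminal
cliques `W_i, W_j` with `|W_i| ≤ |W_j|`, the clique `W_i` is strictly linked into `W_j`. -/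
theorem no_safe_separation_strictly_linked {V : Type} [Fintype V]
    (G : SimpleGraph V) (Ws : Set (Set V)) (k : ℕ)
    (hI : IsPSTWInstance G Ws k)
    (hnosafe : ∀ A S B : Set V, ¬ IsSafeSeparation G Ws A S B) :
    ∀ Wi ∈ Ws, ∀ Wj ∈ Ws, Wi.ncard ≤ Wj.ncard → StrictlyLinkedInto G Wi Wj :=
  no_safe_separation_strictly_linked_general G Ws hnosafe
end
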